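/- arXiv:1005.3787 — 2 statements merged into one kernel-verified Lean document; each statement's English description precedes it below -/
import Mathlib

section
/- With μ₄ as defined via the cases m(2k+1)-2k ≤ N ≤ m(2k+1)-k-1 ↦ 2m-2, m(2k+1)-k ≤ N ≤ m(2k+1)-1 ↦ 2m, N = m(2k+1) ↦ 2m+2 (k ≥ 1 fixed): the number of N ≥ 1 with μ₄(N) = 0 is k, with μ₄(N) = 2 is 2k, and with μ₄(N) = d is 2k+1 for every even d ≥ 4. -/
private lemma gamma4_cover (k N : ℕ) (hk : 1 ≤ k) (hN : 1 ≤ N) :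
    ∃ m, 1 ≤ m ∧ m * (2 * k + 1) - 2 * k ≤ N ∧ N ≤ m * (2 * k + 1) := by
  refine ⟨(N + 2 * k) / (2 * k + 1), ?_, ?_, ?_⟩
  · rw [Nat.one_le_div_iff (by omega)]; omega
  all_goals
    have h2 : (2*k+1) * ((N + 2*k) / (2*k+1)) + (N + 2*k) % (2*k+1) = N + 2*k :=
      Nat.div_add_mod _ _
    have h3 : (N + 2*k) % (2*k+1) < 2*k+1 := Nat.mod_lt _ (by omega)
    have hcm : ((N + 2*k) / (2*k+1)) * (2*k+1) = (2*k+1) * ((N + 2*k) / (2*k+1)) :=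
      Nat.mul_comm _ _
    omega

private lemma gamma4_trich (k : ℕ) (hk : 1 ≤ k) (μ₄ : ℕ → ℤ)
    (hcase1 : ∀ m N : ℕ, 1 ≤ m → m * (2 * k + 1) - 2 * k ≤ N →
      N ≤ m * (2 * k + 1) - k - 1 → μ₄ N = 2 * (m : ℤ) - 2)
    (hcase2 : ∀ m N : ℕ, 1 ≤ m → m * (2 * k + 1) - k ≤ N →
      N ≤ m * (2 * k + 1) - 1 → μ₄ N = 2 * (m : ℤ))
    (hcase3 : ∀ m : ℕ, 1 ≤ m → μ₄ (m * (2 * k + 1)) = 2 * (m : ℤ) + 2)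
    (N : ℕ) (hN : 1 ≤ N) :
    ∃ m : ℕ, 1 ≤ m ∧
      ((μ₄ N = 2 * (m : ℤ) - 2 ∧ m * (2*k+1) - 2*k ≤ N ∧ N ≤ m * (2*k+1) - k - 1) ∨
       (μ₄ N = 2 * (m : ℤ) ∧ m * (2*k+1) - k ≤ N ∧ N ≤ m * (2*k+1) - 1) ∨
       (μ₄ N = 2 * (m : ℤ) + 2 ∧ N = m * (2*k+1))) := by
  obtain ⟨m, hm, hlo, hhi⟩ := gamma4_cover k N hk hN
  have hM : 2 * k + 1 ≤ m * (2 * k + 1) := Nat.le_mul_of_pos_left _ hm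
  refine ⟨m, hm, ?_⟩
  rcases lt_trichotomy N (m * (2*k+1) - k) with h | h | h
  · exact Or.inl ⟨hcase1 m N hm hlo (by omega), hlo, by omega⟩
  · exact Or.inr (Or.inl ⟨hcase2 m N hm (by omega) (by omega), by omega, by omega⟩)
  · rcases lt_or_eq_of_le hhi with h2 | h2
    · exact Or.inr (Or.inl ⟨hcase2 m N hm (by omega) (by omega), by omega, by omega⟩)
    · exact Or.inr (Or.inr ⟨h2 ▸ hcase3 m hm, h2⟩)

theorem gamma4_index_multiplicities (k : ℕ) (hk : 1 ≤ k)
    (μ₄ : ℕ → ℤ)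
    (hcase1 : ∀ m N : ℕ, 1 ≤ m → m * (2 * k + 1) - 2 * k ≤ N →
      N ≤ m * (2 * k + 1) - k - 1 → μ₄ N = 2 * (m : ℤ) - 2)
    (hcase2 : ∀ m N : ℕ, 1 ≤ m → m * (2 * k + 1) - k ≤ N →
      N ≤ m * (2 * k + 1) - 1 → μ₄ N = 2 * (m : ℤ))
    (hcase3 : ∀ m : ℕ, 1 ≤ m → μ₄ (m * (2 * k + 1)) = 2 * (m : ℤ) + 2) :
    ({N : ℕ | 1 ≤ N ∧ μ₄ N = 0} : Set ℕ).ncard = k ∧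
    ({N : ℕ | 1 ≤ N ∧ μ₄ N = 2} : Set ℕ).ncard = 2 * k ∧
    ∀ d : ℤ, Even d → 4 ≤ d →
      ({N : ℕ | 1 ≤ N ∧ μ₄ N = d} : Set ℕ).ncard = 2 * k + 1 := by
  have trich := gamma4_trich k hk μ₄ hcase1 hcase2 hcase3
  refine ⟨?_, ?_, ?_⟩
  · -- value 0 : set = Icc 1 k
    have hset : ({N : ℕ | 1 ≤ N ∧ μ₄ N = 0} : Set ℕ) = ↑(Finset.Icc 1 k) := by
      ext N
      simp only [Set.mem_setOf_eq, Finset.coe_Icc, Set.mem_Icc]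
      constructor
      · rintro ⟨hN, hv⟩
        obtain ⟨m, hm, hc⟩ := trich N hN
        have hM : 2 * k + 1 ≤ m * (2 * k + 1) := Nat.le_mul_of_pos_left _ hm
        rcases hc with ⟨he, h1, h2⟩ | ⟨he, h1, h2⟩ | ⟨he, h2⟩ <;> rw [hv] at he
        · have hm1 : m = 1 := by omega
          subst hm1; omega
        · omega
        · omega
      · rintro ⟨h1, h2⟩
        refine ⟨h1, ?_⟩
        have := hcase1 1 N le_rfl (by omega) (by omega)
        simpa using this
    rw [hset, Set.ncard_coe_finset, Nat.card_Icc]; omega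
  · -- value 2 : set = Icc (k+1) (2k) ∪ Icc (2k+2) (3k+1)
    have hset : ({N : ℕ | 1 ≤ N ∧ μ₄ N = 2} : Set ℕ) =
        ↑(Finset.Icc (k+1) (2*k) ∪ Finset.Icc (2*k+2) (3*k+1)) := by
      ext N
      simp only [Set.mem_setOf_eq, Finset.coe_union, Finset.coe_Icc, Set.mem_union,
        Set.mem_Icc]
      constructor
      · rintro ⟨hN, hv⟩
        obtain ⟨m, hm, hc⟩ := trich N hN
        have hM : 2 * k + 1 ≤ m * (2 * k + 1) := Nat.le_mul_of_pos_left _ hm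
        rcases hc with ⟨he, h1, h2⟩ | ⟨he, h1, h2⟩ | ⟨he, h2⟩ <;> rw [hv] at he
        · have hm2 : m = 2 := by omega
          subst hm2
          right; omega
        · have hm1 : m = 1 := by omega
          subst hm1
          left; omega
        · omega
      · rintro (⟨h1, h2⟩ | ⟨h1, h2⟩)
        · refine ⟨by omega, ?_⟩
          have := hcase2 1 N le_rfl (by omega) (by omega)
          simpa using this
        · refine ⟨by omega, ?_⟩
          have := hcase1 2 N (by omega) (by omega) (by omega)
          rw [this]; norm_num
    rw [hset, Set.ncard_coe_finset, Finset.card_union_of_disjoint, Nat.card_Icc,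
      Nat.card_Icc]
    · omega
    · simp only [Finset.disjoint_left, Finset.mem_Icc]
      omega
  · -- even d ≥ 4
    intro d hd hd4
    obtain ⟨t, ht⟩ := hd
    set tn : ℕ := t.toNat with htn
    have htn2 : 2 ≤ tn := by omega
    have htcast : (tn : ℤ) = t := Int.toNat_of_nonneg (by omega)
    set M : ℕ := tn * (2 * k + 1) with hMdef
    have hMid : (tn + 1) * (2 * k + 1) = M + (2 * k + 1) := by ring
    have hMid2 : (tn - 1) * (2 * k + 1) = M - (2 * k + 1) := by
      have h : (tn - 1) * (2*k+1) + 1 * (2*k+1) = tn * (2*k+1) := by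
        rw [← Nat.add_mul]; congr 1; omega
      omega
    have hMge : 2 * (2 * k + 1) ≤ M := Nat.mul_le_mul_right _ htn2
    have hset : ({N : ℕ | 1 ≤ N ∧ μ₄ N = d} : Set ℕ) =
        ↑(Finset.Icc (M - (2*k+1)) (M - (2*k+1)) ∪ Finset.Icc (M - k) (M - 1)
          ∪ Finset.Icc (M + 1) (M + k)) := by
      ext N
      simp only [Set.mem_setOf_eq, Finset.coe_union, Finset.coe_Icc, Set.mem_union,
        Set.mem_Icc]
      constructor
      · rintro ⟨hN, hv⟩
        obtain ⟨m, hm, hc⟩ := trich N hN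
        have hM : 2 * k + 1 ≤ m * (2 * k + 1) := Nat.le_mul_of_pos_left _ hm
        rcases hc with ⟨he, h1, h2⟩ | ⟨he, h1, h2⟩ | ⟨he, h2⟩ <;> rw [hv] at he
        · have hmval : m = tn + 1 := by omega
          subst hmval
          right; omega
        · have hmval : m = tn := by omega
          subst hmval
          left; right; omega
        · have hmval : m = tn - 1 := by omega
          subst hmval
          left; left; omega
      · rintro ((⟨h1, h2⟩ | ⟨h1, h2⟩) | ⟨h1, h2⟩)
        · refine ⟨by omega, ?_⟩
          have hNval : N = (tn - 1) * (2 * k + 1) := by omega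
          rw [hNval, hcase3 (tn - 1) (by omega)]
          have : ((tn - 1 : ℕ) : ℤ) = (tn : ℤ) - 1 := by omega
          rw [this]; omega
        · refine ⟨by omega, ?_⟩
          rw [hcase2 tn N (by omega) (by omega) (by omega)]
          omega
        · refine ⟨by omega, ?_⟩
          rw [hcase1 (tn + 1) N (by omega) (by omega) (by omega)]
          push_cast
          omega
    rw [hset, Set.ncard_coe_finset, Finset.card_union_of_disjoint,
      Finset.card_union_of_disjoint, Nat.card_Icc, Nat.card_Icc, Nat.card_Icc]
    · omega
    · simp only [Finset.disjoint_left, Finset.mem_Icc]; omega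
    · simp only [Finset.disjoint_left, Finset.mem_union, Finset.mem_Icc]; omega
end

section
/- Let k ≥ 1 and let R = (a₁,a₂,a₃) with a₁,a₂ ℚ-independent negative reals and a₃ such that all four coefficients b¹,b²,b³,b⁴ (from the edge decompositions of C(k)) are positive. Then the total rank function r(d) := #{(ℓ,N) : μ_{CZ}(γ_ℓ^N) = d} satisfies r(0) = k, r(2) = 2k+1, and r(d) = 2k+2 for all even d ≥ 4, and r(d) = 0 for odd d, where μ_{CZ}(γ₁^N) = 2⌊N/k⌋ - 1 + (1 if k∤N else -1), μ_{CZ}(γ₂^N) = 2N, μ_{CZ}(γ₃^N) = 2⌊N/k⌋ + 1 + (1 if k∤N else 1·sign((2k-1)a₁+a₂)), μ_{CZ}(γ₄^N) = 2N - sign((2k-1)a₁+a₂) + 1, with sign((2k-1)a₁+a₂) = -1 since a₁,a₂ < 0. -/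
/-- sign of a real number, as an integer. -/
noncomputable def sgn (x : ℝ) : ℤ := if 0 < x then 1 else if x < 0 then -1 else 0

/-- The Conley–Zehnder indices of the iterates `γ_ℓ^N` of the four simple closed
Reeb orbits of `R_ν` on `(S² × S³, ξ_k)`, for `a₁, a₂ < 0`:
`μ(γ₁^N) = 2⌊N/k⌋ - 1 + (1 if k∤N else -1)`, `μ(γ₂^N) = 2N`,
`μ(γ₃^N) = 2⌊N/k⌋ + 1 + (1 if k∤N else sign((2k-1)a₁+a₂))`,
`μ(γ₄^N) = 2N - sign((2k-1)a₁+a₂) + 1`. -/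
noncomputable def czIndex (k : ℕ) (a₁ a₂ : ℝ) : Fin 4 → ℕ → ℤ :=
  ![fun N => 2 * ((N / k : ℕ) : ℤ) - 1 + (if ¬ k ∣ N then 1 else -1),
    fun N => 2 * (N : ℤ),
    fun N => 2 * ((N / k : ℕ) : ℤ) + 1 +
      (if ¬ k ∣ N then 1 else sgn ((2 * (k : ℝ) - 1) * a₁ + a₂)),
    fun N => 2 * (N : ℤ) - sgn ((2 * (k : ℝ) - 1) * a₁ + a₂) + 1]

private lemma char1 (k m N : ℕ) (hk : 1 ≤ k) :
    2 * ((N / k : ℕ) : ℤ) - 1 + (if ¬ k ∣ N then 1 else -1) = 2 * (m : ℤ) ↔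
      m * k + 1 ≤ N ∧ N ≤ m * k + k := by
  have h0 : 0 < k := hk
  by_cases h : k ∣ N
  · simp only [h, not_true_eq_false, if_false]
    constructor
    · intro he
      obtain ⟨c, rfl⟩ := h
      rw [Nat.mul_div_cancel_left c h0] at he
      have hc : c = m + 1 := by omega
      subst hc
      constructor <;> nlinarith
    · rintro ⟨hlo, hhi⟩
      obtain ⟨c, rfl⟩ := h
      have h1 : m < c := Nat.lt_of_mul_lt_mul_left (a := k) (by nlinarith)
      have h2 : c ≤ m + 1 := Nat.le_of_mul_le_mul_left (by nlinarith) h0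
      have hc : c = m + 1 := by omega
      subst hc
      rw [Nat.mul_div_cancel_left _ h0]
      push_cast; ring
  · simp only [h, not_false_eq_true, if_true]
    have hr : N % k ≠ 0 := fun hr0 => h (Nat.dvd_of_mod_eq_zero hr0)
    have hd := Nat.div_add_mod N k
    have hm := Nat.mod_lt N h0
    constructor
    · intro he
      have he' : N / k = m := by generalize hq : N / k = q at he; omega
      rw [he', Nat.mul_comm k m] at hd
      generalize m * k = t at hd ⊢
      omega
    · rintro ⟨hlo, hhi⟩
      have hne : N ≠ m * k + k := fun hNe => h ⟨m + 1, by rw [hNe]; ring⟩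
      have he' : N / k = m :=
        Nat.div_eq_of_lt_le (Nat.le_of_succ_le hlo)
          (by rw [add_one_mul]; exact lt_of_le_of_ne hhi hne)
      rw [he']; ring

private lemma char3 (k m N : ℕ) (hk : 1 ≤ k) :
    2 * ((N / k : ℕ) : ℤ) + 1 + (if ¬ k ∣ N then 1 else -1) = 2 * (m : ℤ) + 2 ↔
      m * k + 1 ≤ N ∧ N ≤ m * k + k := by
  rw [← char1 k m N hk]
  constructor <;> intro h <;> linarith

private lemma cardIcc (a k : ℕ) : (Finset.Icc (a + 1) (a + k)).card = k := by
  rw [Nat.card_Icc]; omega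

private lemma card_helper (A B C D : Finset ℕ) :
    ((({0} : Finset (Fin 4)) ×ˢ A) ∪ ({1} ×ˢ B) ∪ ({2} ×ˢ C) ∪ ({3} ×ˢ D)).card
      = A.card + B.card + C.card + D.card := by
  rw [Finset.card_union_of_disjoint, Finset.card_union_of_disjoint,
    Finset.card_union_of_disjoint] <;>
    simp [Finset.disjoint_left, Finset.mem_product, Fin.ext_iff] <;> omega

private lemma mem_helper (A B C D : Finset ℕ) (i : Fin 4) (N : ℕ) :
    ((i, N) ∈ ((({0} : Finset (Fin 4)) ×ˢ A) ∪ ({1} ×ˢ B) ∪ ({2} ×ˢ C) ∪ ({3} ×ˢ D)) ↔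
      N ∈ ![A, B, C, D] i) := by
  fin_cases i <;>
    simp only [Finset.mem_union, Finset.mem_product, Finset.mem_singleton,
      Matrix.cons_val_zero, Matrix.cons_val_one, Matrix.head_cons,
      Matrix.cons_val_two, Matrix.tail_cons, Matrix.cons_val_three] <;>
    simp [Fin.ext_iff, show ((3 : Fin 4) : ℕ) = 3 from rfl]

private lemma count (k : ℕ) (hk : 1 ≤ k) (a₁ a₂ : ℝ)
    (hs : sgn ((2 * (k : ℝ) - 1) * a₁ + a₂) = -1) (m : ℕ) :
    ({p : Fin 4 × ℕ | 1 ≤ p.2 ∧ czIndex k a₁ a₂ p.1 p.2 = 2 * (m : ℤ)}).ncard =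
      k + (if 1 ≤ m then k + 1 else 0) + (if 2 ≤ m then 1 else 0) := by
  classical
  have h0 : 0 < k := hk
  have hset : {p : Fin 4 × ℕ | 1 ≤ p.2 ∧ czIndex k a₁ a₂ p.1 p.2 = 2 * (m : ℤ)} =
      ↑((({0} : Finset (Fin 4)) ×ˢ Finset.Icc (m * k + 1) (m * k + k)) ∪
        ({1} ×ˢ (if 1 ≤ m then {m} else ∅)) ∪
        ({2} ×ˢ (if 1 ≤ m then Finset.Icc ((m - 1) * k + 1) ((m - 1) * k + k) else ∅)) ∪
        ({3} ×ˢ (if 2 ≤ m then {m - 1} else ∅))) := by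
    ext ⟨i, N⟩
    rw [Set.mem_setOf_eq, Finset.mem_coe, mem_helper]
    fin_cases i <;>
      simp only [czIndex, Fin.reduceFinMk, Fin.zero_eta, Fin.isValue, Matrix.cons_val', Matrix.empty_val', Matrix.cons_val_fin_one, Matrix.cons_val_zero, Matrix.cons_val_one, Matrix.cons_val_two, Matrix.cons_val_three, Matrix.tail_cons, Matrix.head_cons, Matrix.vecHead, hs]
    · -- family γ₁
      rw [Finset.mem_Icc]
      constructor
      · rintro ⟨-, h⟩; exact (char1 k m N hk).mp h
      · intro h
        exact ⟨le_trans (Nat.le_add_left 1 (m * k)) h.1, (char1 k m N hk).mpr h⟩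
    · -- family γ₂
      by_cases h1 : 1 ≤ m
      · rw [if_pos h1]; simp only [Finset.mem_singleton]; omega
      · rw [if_neg h1]; simp only [Finset.notMem_empty, iff_false]; omega
    · -- family γ₃
      by_cases h1 : 1 ≤ m
      · obtain ⟨m', rfl⟩ : ∃ m', m = m' + 1 := ⟨m - 1, by omega⟩
        rw [if_pos h1, show (2 * ((m' + 1 : ℕ) : ℤ)) = 2 * (m' : ℤ) + 2 by push_cast; ring,
          Finset.mem_Icc, Nat.add_sub_cancel]
        constructor
        · rintro ⟨-, h⟩; exact (char3 k m' N hk).mp h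
        · intro h
          exact ⟨le_trans (Nat.le_add_left 1 (m' * k)) h.1, (char3 k m' N hk).mpr h⟩
      · rw [if_neg h1]
        simp only [Finset.notMem_empty, iff_false, not_and]
        intro hN he
        by_cases hdvd : k ∣ N
        · simp only [hdvd, not_true_eq_false, if_false] at he
          have hkN : k ≤ N := Nat.le_of_dvd (by omega) hdvd
          have h1' : 1 ≤ N / k := (Nat.one_le_div_iff h0).mpr hkN
          generalize N / k = q at he h1'
          omega
        · simp only [hdvd, not_false_eq_true, if_true] at he
          generalize N / k = q at he
          omega
    · -- family γ₄
      by_cases h2 : 2 ≤ m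
      · rw [if_pos h2]; simp only [Finset.mem_singleton]; omega
      · rw [if_neg h2]; simp only [Finset.notMem_empty, iff_false]; omega
  rw [hset, Set.ncard_coe_finset, card_helper, cardIcc]
  split_ifs with h1 h2 h2 <;>
    (try simp only [cardIcc, Finset.card_singleton, Finset.card_empty]) <;> omega

private lemma odd_count (k : ℕ) (a₁ a₂ : ℝ)
    (hs : sgn ((2 * (k : ℝ) - 1) * a₁ + a₂) = -1) (d : ℤ) (hd : Odd d) :
    ({p : Fin 4 × ℕ | 1 ≤ p.2 ∧ czIndex k a₁ a₂ p.1 p.2 = d}).ncard = 0 := by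
  obtain ⟨j, hj⟩ := hd
  have : {p : Fin 4 × ℕ | 1 ≤ p.2 ∧ czIndex k a₁ a₂ p.1 p.2 = d} = ∅ := by
    rw [Set.eq_empty_iff_forall_notMem]
    rintro ⟨i, N⟩ ⟨hN, he⟩
    fin_cases i <;>
      simp only [czIndex, Fin.reduceFinMk, Fin.zero_eta, Fin.isValue, Matrix.cons_val', Matrix.empty_val', Matrix.cons_val_fin_one, Matrix.cons_val_zero, Matrix.cons_val_one, Matrix.cons_val_two, Matrix.cons_val_three, Matrix.tail_cons, Matrix.head_cons, Matrix.vecHead, hs] at he <;>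
      first
        | (split_ifs at he <;> (generalize N / k = q at he; omega))
        | omega
  rw [this, Set.ncard_empty]

theorem contact_homology_ranks_of_xi_k (k : ℕ) (hk : 1 ≤ k) (a₁ a₂ a₃ : ℝ)
    (h₁ : a₁ < 0) (h₂ : a₂ < 0)
    (hQ : LinearIndependent ℚ ![a₁, a₂])
    (hb₁ : 0 < -(k : ℝ) * a₁ - a₂ + (k : ℝ) * a₃)
    (hb₂ : 0 < -a₁ + a₂ + a₃)
    (hb₃ : 0 < (1 - (k : ℝ)) * a₁ - a₂ + (k : ℝ) * a₃)
    (hb₄ : 0 < 2 * (k : ℝ) * a₁ + a₂ + a₃) :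
    sgn ((2 * (k : ℝ) - 1) * a₁ + a₂) = -1 ∧
    ({p : Fin 4 × ℕ | 1 ≤ p.2 ∧ czIndex k a₁ a₂ p.1 p.2 = 0}).ncard = k ∧
    ({p : Fin 4 × ℕ | 1 ≤ p.2 ∧ czIndex k a₁ a₂ p.1 p.2 = 2}).ncard = 2 * k + 1 ∧
    (∀ d : ℤ, Even d → 4 ≤ d →
      ({p : Fin 4 × ℕ | 1 ≤ p.2 ∧ czIndex k a₁ a₂ p.1 p.2 = d}).ncard = 2 * k + 2) ∧
    (∀ d : ℤ, Odd d →
      ({p : Fin 4 × ℕ | 1 ≤ p.2 ∧ czIndex k a₁ a₂ p.1 p.2 = d}).ncard = 0) := by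
  have hk1 : (1 : ℝ) ≤ (k : ℝ) := by exact_mod_cast hk
  have hneg : (2 * (k : ℝ) - 1) * a₁ + a₂ < 0 := by nlinarith
  have hs : sgn ((2 * (k : ℝ) - 1) * a₁ + a₂) = -1 := by
    rw [sgn, if_neg (by linarith), if_pos hneg]
  refine ⟨hs, ?_, ?_, ?_, ?_⟩
  · have h := count k hk a₁ a₂ hs 0
    simpa using h
  · have h := count k hk a₁ a₂ hs 1
    norm_num at h
    omega
  · intro d hev hd4
    obtain ⟨r, hr⟩ := hev
    have hm : d = 2 * ((d.toNat / 2 : ℕ) : ℤ) := by omega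
    rw [hm, count k hk a₁ a₂ hs (d.toNat / 2),
      if_pos (show 1 ≤ d.toNat / 2 by omega), if_pos (show 2 ≤ d.toNat / 2 by omega)]
    ring
  · intro d hd
    exact odd_count k a₁ a₂ hs d hd
end
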